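/- Assume the sign-coherence of C-matrices: for every skew-symmetrizable initial integer matrix and every path, the associated C-matrix is column sign-coherent. Let B be a skew-symmetrizable n×n integer matrix and let t be reached from t_0 by a path with all directions in {1,…,n}. Then the 2n×2n C-matrix of the principal extension is block diagonal: C^{B̄;t_0}_t = [[C^{B;t_0}_t, O], [O, I_n]]. -/

import Mathlib

open Matrix

section Defs

variable {ι : Type} [Fintype ι] [DecidableEq ι]
variable {R : Type} [CommRing R] [LinearOrder R] [IsStrictOrderedRing R]

/-- Entrywise positive part `[A]₊`. -/
def matPos (A : Matrix ι ι R) : Matrix ι ι R := fun i j => max (A i j) 0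

/-- `A^{k•}`: the matrix keeping only the `k`-th row of `A`. -/
def rowSel (k : ι) (A : Matrix ι ι R) : Matrix ι ι R := fun i j => if i = k then A i j else 0

/-- `A^{•k}`: the matrix keeping only the `k`-th column of `A`. -/
def colSel (k : ι) (A : Matrix ι ι R) : Matrix ι ι R := fun i j => if j = k then A i j else 0

/-- Entrywise maximum of two matrices. -/
def emax (A B : Matrix ι ι R) : Matrix ι ι R := fun i j => max (A i j) (B i j)

/-- `J_ℓ`: identity matrix with `(ℓ,ℓ)` entry replaced by `-1`. -/
def Jmat (ℓ : ι) : Matrix ι ι R := Matrix.diagonal fun i => if i = ℓ then -1 else 1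

/-- Matrix mutation `μ_k(B)` in direction `k`. -/
def mutate (B : Matrix ι ι R) (k : ι) : Matrix ι ι R := fun i j =>
  if i = k ∨ j = k then -(B i j)
  else B i j + max (B i k) 0 * B k j + B i k * max (-(B k j)) 0

/-- The data `(B_t, C_t, G_t, F_t)` attached to a vertex. -/
structure SeedData (ι R : Type) where
  B : Matrix ι ι R
  C : Matrix ι ι R
  G : Matrix ι ι R
  F : Matrix ι ι R

/-- One final-seed mutation step in direction `ℓ` (with initial exchange matrix `B0`). -/
def seedStep (B0 : Matrix ι ι R) (s : SeedData ι R) (ℓ : ι) : SeedData ι R where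
  B := mutate s.B ℓ
  C := s.C * (Jmat ℓ + rowSel ℓ (matPos s.B)) + colSel ℓ (matPos (-s.C)) * s.B
  G := s.G * (Jmat ℓ + colSel ℓ (matPos s.B)) - B0 * colSel ℓ (matPos s.C)
  F := s.F * Jmat ℓ + emax (colSel ℓ (matPos s.C) + s.F * colSel ℓ (matPos s.B))
      (colSel ℓ (matPos (-s.C)) + s.F * colSel ℓ (matPos (-s.B)))

/-- The seed data at the endpoint of the path `p` starting from the initial vertex. -/
def seedOf (B0 : Matrix ι ι R) (p : List ι) : SeedData ι R :=
  p.foldl (seedStep B0) ⟨B0, 1, 1, 0⟩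

/-- The exchange matrix `B_t` at the end of the path `p`. -/
def Bpath (B : Matrix ι ι R) (p : List ι) : Matrix ι ι R := (seedOf B p).B

/-- The `C`-matrix `C^{B;t_0}_t` at the end of the path `p`. -/
def Cmat (B : Matrix ι ι R) (p : List ι) : Matrix ι ι R := (seedOf B p).C

/-- The `G`-matrix `G^{B;t_0}_t` at the end of the path `p`. -/
def Gmat (B : Matrix ι ι R) (p : List ι) : Matrix ι ι R := (seedOf B p).G

/-- The `F`-matrix `F^{B;t_0}_t` at the end of the path `p`. -/
def Fmat (B : Matrix ι ι R) (p : List ι) : Matrix ι ι R := (seedOf B p).F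

/-- `B` is skew-symmetrizable: `DB` is skew-symmetric for some positive diagonal `D`. -/
def IsSkewSymmetrizable (B : Matrix ι ι ℤ) : Prop :=
  ∃ d : ι → ℤ, (∀ i, 0 < d i) ∧ (Matrix.diagonal d * B)ᵀ = -(Matrix.diagonal d * B)

/-- Column sign-coherence: every column is nonzero and has all entries of one sign. -/
def ColSignCoherent (A : Matrix ι ι ℤ) : Prop :=
  ∀ j, (∃ i, A i j ≠ 0) ∧ ((∀ i, 0 ≤ A i j) ∨ (∀ i, A i j ≤ 0))

/-- Row sign-coherence: every row is nonzero and has all entries of one sign. -/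
def RowSignCoherent (A : Matrix ι ι ℤ) : Prop :=
  ∀ i, (∃ j, A i j ≠ 0) ∧ ((∀ j, 0 ≤ A i j) ∨ (∀ j, A i j ≤ 0))

/-- `ε` is the column sign `ε_{•ℓ}(A)` of the (sign-coherent, nonzero) `ℓ`-th column of `A`. -/
def IsColSign (ε : ℤ) (A : Matrix ι ι ℤ) (ℓ : ι) : Prop :=
  (ε = 1 ∨ ε = -1) ∧ (∃ i, A i ℓ ≠ 0) ∧ ∀ i, 0 ≤ ε * A i ℓ

/-- `ε` is the row sign `ε_{k•}(A)` of the (sign-coherent, nonzero) `k`-th row of `A`. -/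
def IsRowSign (ε : ℤ) (A : Matrix ι ι ℤ) (k : ι) : Prop :=
  (ε = 1 ∨ ε = -1) ∧ (∃ j, A k j ≠ 0) ∧ ∀ j, 0 ≤ ε * A k j

/-- Sign-coherence of `C`-matrices: for every skew-symmetrizable initial integer matrix and
every path, the associated `C`-matrix is column sign-coherent. -/
def SignCoherenceOfC : Prop :=
  ∀ (κ : Type) [Fintype κ] [DecidableEq κ], ∀ B : Matrix κ κ ℤ,
    IsSkewSymmetrizable B → ∀ p : List κ, ColSignCoherent (Cmat B p)

/-- The principal extension `B̄ = [[B, -I],[I, O]]` of `B`, on the index type `Fin n ⊕ Fin n`. -/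
def pext {n : ℕ} (B : Matrix (Fin n) (Fin n) ℤ) :
    Matrix (Fin n ⊕ Fin n) (Fin n ⊕ Fin n) ℤ :=
  Matrix.fromBlocks B (-1) 1 0

noncomputable section FPolys

/-- The ambient field of rational functions `ℚ(y_i : i ∈ ι)` (fraction field of `ℤ[y_i]`). -/
abbrev FField (ι : Type) := FractionRing (MvPolynomial ι ℤ)

/-- The variable `y_i` inside the fraction field. -/
def yvar (i : ι) : FField ι := algebraMap (MvPolynomial ι ℤ) (FField ι) (MvPolynomial.X i)

/-- One mutation step for the triple `(B_t, C_t, (F_{j;t})_j)`. -/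
def fpolyStep (s : Matrix ι ι ℤ × Matrix ι ι ℤ × (ι → FField ι)) (ℓ : ι) :
    Matrix ι ι ℤ × Matrix ι ι ℤ × (ι → FField ι) :=
  ⟨mutate s.1 ℓ,
   s.2.1 * (Jmat ℓ + rowSel ℓ (matPos s.1)) + colSel ℓ (matPos (-s.2.1)) * s.1,
   fun j => if j = ℓ then
     (s.2.2 ℓ)⁻¹ *
       ((∏ i, yvar i ^ (max (s.2.1 i ℓ) 0).toNat) * (∏ i, s.2.2 i ^ (max (s.1 i ℓ) 0).toNat)
        + (∏ i, yvar i ^ (max (-(s.2.1 i ℓ)) 0).toNat) *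
            (∏ i, s.2.2 i ^ (max (-(s.1 i ℓ)) 0).toNat))
   else s.2.2 j⟩

/-- The `F`-polynomial `F^{B;t_0}_{j;t}` (as an element of the field of rational functions)
at the end of the path `p`. -/
def Fpoly (B : Matrix ι ι ℤ) (p : List ι) : ι → FField ι :=
  (p.foldl fpolyStep ⟨B, 1, fun _ => 1⟩).2.2

/-- The polynomial representing an element of the fraction field (when it is a polynomial). -/
def polyOf (x : FField ι) : MvPolynomial ι ℤ := by
  classical exact
    if h : ∃ q : MvPolynomial ι ℤ, algebraMap (MvPolynomial ι ℤ) (FField ι) q = x then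
      h.choose else 0

/-- The `H`-matrix `H^{B;t_0}_t`: `h_{ij;t}` is the minimum over exponent vectors `a` in the
support of `F^{B;t_0}_{j;t}` of `-a_i + ∑_{l ≠ i} [-b_{il}]₊ a_l`. -/
def Hmat (B : Matrix ι ι ℤ) (p : List ι) : Matrix ι ι ℤ := fun i j =>
  if h : (polyOf (Fpoly B p j)).support.Nonempty then
    (polyOf (Fpoly B p j)).support.inf' h
      (fun a => -(a i : ℤ) + ∑ l ∈ Finset.univ.erase i, max (-(B i l)) 0 * (a l : ℤ))
  else 0

end FPolys

/-- The embedding `ℚ(y_1,…,y_n) → ℚ(y_1,…,y_{2n})` sending `y_i` to `y_i`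
(the second batch of variables indexed by the right summand). -/
noncomputable def embK (n : ℕ) : FField (Fin n) →+* FField (Fin n ⊕ Fin n) :=
  IsFractionRing.lift
    (g := (algebraMap (MvPolynomial (Fin n ⊕ Fin n) ℤ) (FField (Fin n ⊕ Fin n))).comp
      (MvPolynomial.rename (Sum.inl : Fin n → Fin n ⊕ Fin n)).toRingHom)
    (by
      intro a b hab
      simp only [RingHom.coe_comp, Function.comp_apply, AlgHom.toRingHom_eq_coe,
        RingHom.coe_coe] at hab
      exact MvPolynomial.rename_injective _ Sum.inl_injective
        (IsFractionRing.injective (MvPolynomial (Fin n ⊕ Fin n) ℤ)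
          (FField (Fin n ⊕ Fin n)) hab))

/-- `D⁻¹ Cᵀ D` over `ℚ`, for the positive diagonal skew-symmetrizer `D = diagonal d`. -/
noncomputable def dCd {n : ℕ} (d : Fin n → ℤ) (C : Matrix (Fin n) (Fin n) ℤ) :
    Matrix (Fin n) (Fin n) ℚ :=
  (Matrix.diagonal fun i => (d i : ℚ))⁻¹ * (C.map (Int.cast : ℤ → ℚ))ᵀ *
    Matrix.diagonal fun i => (d i : ℚ)

end Defs

/-!
Along a path with directions in the first block, induction shows `B̄_t = [[B_t, X_t], [C_t, O]]`
and `C̄_t = [[C_t, O], [O, I]]`. Mutation preserves the skew-symmetrizer `diag(D, D)` of `B̄`, so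
`d_k x_{kj} = -d_j c_{jk}`; since column `k` of `C_t` is sign-coherent, `c_{ik} x_{kj} ≤ 0` for all
`i, j`. This sign condition makes `[c_{ik}]₊ x_{kj} + c_{ik} [-x_{kj}]₊` vanish, which is exactly
what would otherwise enter the lower-right block of `B̄` and the upper-right block of `C̄`.
-/

section ScalarIdentities

variable {R : Type} [CommRing R] [LinearOrder R] [IsStrictOrderedRing R]

lemma two_mul_max_zero (a : R) : 2 * max a 0 = a + |a| := by
  linarith [max_zero_add_max_neg_zero_eq_abs_self a, max_zero_sub_max_neg_zero_eq_self a]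

lemma two_mul_max_zero_mul_add_mul_max_neg_zero (a b : R) :
    2 * (max a 0 * b + a * max (-b) 0) = |a| * b + a * |b| := by
  linear_combination b * two_mul_max_zero a + a * two_mul_max_zero (-b) + a * abs_neg b

lemma mul_max_zero_add_max_neg_zero_mul (a b : R) :
    a * max b 0 + max (-a) 0 * b = max a 0 * b + a * max (-b) 0 := by
  linear_combination a * max_zero_sub_max_neg_zero_eq_self b
    - b * max_zero_sub_max_neg_zero_eq_self a

lemma abs_mul_add_mul_abs_of_mul_nonpos {a b : R} (h : a * b ≤ 0) : |a| * b + a * |b| = 0 := by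
  rcases le_total 0 a with ha | ha <;> rcases le_total 0 b with hb | hb <;>
    simp only [abs_of_nonneg, abs_of_nonpos, ha, hb] <;> nlinarith

lemma max_zero_mul_add_mul_max_neg_zero_of_mul_nonpos {a b : R} (h : a * b ≤ 0) :
    max a 0 * b + a * max (-b) 0 = 0 := by
  have h2 := two_mul_max_zero_mul_add_mul_max_neg_zero a b
  rw [abs_mul_add_mul_abs_of_mul_nonpos h] at h2
  simpa using h2

end ScalarIdentities

section Mutation

variable {ι R : Type} [CommRing R] [LinearOrder R] [IsStrictOrderedRing R]

def SkewSymmetrizedBy (d : ι → R) (B : Matrix ι ι R) : Prop :=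
  ∀ i j, d i * B i j = -(d j * B j i)

lemma IsSkewSymmetrizable.exists_skewSymmetrizedBy [Fintype ι] [DecidableEq ι]
    {B : Matrix ι ι ℤ} (h : IsSkewSymmetrizable B) :
    ∃ d, (∀ i, 0 < d i) ∧ SkewSymmetrizedBy d B := by
  obtain ⟨d, hd, hskew⟩ := h
  refine ⟨d, hd, fun i j => ?_⟩
  have := congrFun (congrFun hskew i) j
  simp only [transpose_apply, diagonal_mul, neg_apply] at this
  linarith

namespace SkewSymmetrizedBy

variable {d : ι → R} {B : Matrix ι ι R}

lemma apply_self_eq_zero (h : SkewSymmetrizedBy d B) {k : ι} (hd : d k ≠ 0) : B k k = 0 := by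
  have := h k k
  simpa [hd] using (show 2 * (d k * B k k) = 0 by linarith)

lemma mul_abs_symm (h : SkewSymmetrizedBy d B) (hd : ∀ i, 0 < d i) (i j : ι) :
    d i * |B i j| = d j * |B j i| := by
  simpa only [_root_.abs_mul, abs_neg, abs_of_pos (hd _)] using congrArg abs (h i j)

end SkewSymmetrizedBy

variable [DecidableEq ι]

lemma two_mul_mutate_apply_of_ne (B : Matrix ι ι R) {i j k : ι} (hi : i ≠ k) (hj : j ≠ k) :
    2 * mutate B k i j = 2 * B i j + |B i k| * B k j + B i k * |B k j| := by
  simp only [mutate, hi, hj, or_self, if_false]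
  linear_combination two_mul_max_zero_mul_add_mul_max_neg_zero (B i k) (B k j)

-- With `2[x]₊ = x + |x|`, mutation reads `2b'_{ij} = 2b_{ij} + |b_{ik}| b_{kj} + b_{ik} |b_{kj}|`,
-- each of whose terms is skew-symmetrized by `d`.
lemma SkewSymmetrizedBy.mutate {d : ι → R} {B : Matrix ι ι R} (h : SkewSymmetrizedBy d B)
    (hd : ∀ i, 0 < d i) (k : ι) : SkewSymmetrizedBy d (mutate B k) := by
  intro i j
  by_cases hk : i = k ∨ j = k
  · simp only [_root_.mutate, hk, hk.symm, if_true]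
    linear_combination -h i j
  · push Not at hk
    have hij := two_mul_mutate_apply_of_ne B hk.1 hk.2
    have hji := two_mul_mutate_apply_of_ne B hk.2 hk.1
    have : 2 * (d i * _root_.mutate B k i j) = 2 * -(d j * _root_.mutate B k j i) := by
      linear_combination d i * hij + d j * hji + 2 * h i j + B k j * h.mul_abs_symm hd i k
        + |B k i| * h k j + |B k j| * h i k - B k i * h.mul_abs_symm hd k j
    exact mul_left_cancel₀ two_ne_zero this

end Mutation

section Seeds

variable {ι R : Type} [Fintype ι] [DecidableEq ι] [CommRing R] [LinearOrder R]

def mutateC (C B : Matrix ι ι R) (ℓ : ι) : Matrix ι ι R :=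
  C * (Jmat ℓ + rowSel ℓ (matPos B)) + colSel ℓ (matPos (-C)) * B

lemma mutateC_apply (C B : Matrix ι ι R) (k i j : ι) :
    mutateC C B k i j
      = (if j = k then -C i j else C i j) + C i k * max (B k j) 0 + max (-C i k) 0 * B k j := by
  simp only [mutateC, Jmat, Matrix.mul_add, Matrix.add_apply, mul_diagonal]
  simp [rowSel, colSel, matPos, mul_apply]

lemma Bpath_append_singleton (B : Matrix ι ι R) (p : List ι) (k : ι) :
    Bpath B (p ++ [k]) = mutate (Bpath B p) k := by
  simp [Bpath, seedOf, seedStep]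

lemma Cmat_append_singleton (B : Matrix ι ι R) (p : List ι) (k : ι) :
    Cmat B (p ++ [k]) = mutateC (Cmat B p) (Bpath B p) k := by
  simp [Cmat, Bpath, seedOf, seedStep, mutateC]

lemma SkewSymmetrizedBy.bpath [IsStrictOrderedRing R] {d : ι → R} {B : Matrix ι ι R}
    (h : SkewSymmetrizedBy d B) (hd : ∀ i, 0 < d i) (p : List ι) :
    SkewSymmetrizedBy d (Bpath B p) := by
  induction p using List.reverseRecOn with
  | nil => exact h
  | append_singleton p k ih => rw [Bpath_append_singleton]; exact ih.mutate hd k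

end Seeds

section PrincipalExtension

variable {α R : Type} [CommRing R] [LinearOrder R] [IsStrictOrderedRing R]

lemma SkewSymmetrizedBy.mul_nonpos_of_fromBlocks {d : α → R} (hd : ∀ i, 0 < d i)
    {A X C Z : Matrix α α R} (h : SkewSymmetrizedBy (Sum.elim d d) (fromBlocks A X C Z))
    {k : α} (hC : ∀ i j, 0 ≤ C i k * C j k) (i j : α) : C i k * X k j ≤ 0 := by
  have hkj : d k * X k j = -(d j * C j k) := by simpa using h (Sum.inl k) (Sum.inr j)
  refine nonpos_of_mul_nonpos_right ?_ (hd k)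
  calc d k * (C i k * X k j) = -(d j * (C i k * C j k)) := by linear_combination C i k * hkj
    _ ≤ 0 := neg_nonpos.2 (mul_nonneg (hd j).le (hC i j))

variable [Fintype α] [DecidableEq α]

lemma mutate_fromBlocks_inl {A X C : Matrix α α R} {k : α} (hkk : A k k = 0)
    (hsign : ∀ i j, C i k * X k j ≤ 0) :
    ∃ X', mutate (fromBlocks A X C 0) (Sum.inl k)
      = fromBlocks (mutate A k) X' (mutateC C A k) 0 := by
  refine ⟨(mutate (fromBlocks A X C 0) (Sum.inl k)).toBlocks₁₂, ?_⟩
  ext (i | i) (j | j)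
  · simp [mutate]
  · rfl
  · simp only [mutate, fromBlocks_apply₂₁, fromBlocks_apply₁₁, reduceCtorEq, Sum.inl.injEq,
      false_or, mutateC_apply]
    split_ifs with hj
    · subst hj
      simp [hkk]
    · linear_combination -mul_max_zero_add_max_neg_zero_mul (C i k) (A k j)
  · simpa [mutate] using max_zero_mul_add_mul_max_neg_zero_of_mul_nonpos (hsign i j)

lemma mutateC_fromBlocks_inl {C A X Y Z : Matrix α α R} {k : α}
    (hsign : ∀ i j, C i k * X k j ≤ 0) :
    mutateC (fromBlocks C 0 0 1) (fromBlocks A X Y Z) (Sum.inl k)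
      = fromBlocks (mutateC C A k) 0 0 1 := by
  ext (i | i) (j | j) <;> simp [mutateC_apply]
  rw [mul_max_zero_add_max_neg_zero_mul]
  exact max_zero_mul_add_mul_max_neg_zero_of_mul_nonpos (hsign i j)

end PrincipalExtension

lemma ColSignCoherent.mul_apply_nonneg {ι : Type} {A : Matrix ι ι ℤ} (h : ColSignCoherent A)
    (i j k : ι) : 0 ≤ A i k * A j k := by
  rcases (h k).2 with hk | hk
  · exact mul_nonneg (hk i) (hk j)
  · exact mul_nonneg_of_nonpos_of_nonpos (hk i) (hk j)

lemma SkewSymmetrizedBy.pext {n : ℕ} {d : Fin n → ℤ} {B : Matrix (Fin n) (Fin n) ℤ}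
    (h : SkewSymmetrizedBy d B) : SkewSymmetrizedBy (Sum.elim d d) (pext B) := by
  rintro (i | i) (j | j)
  · exact h i j
  · by_cases hij : i = j <;> simp [_root_.pext, one_apply, hij, eq_comm]
  · by_cases hij : i = j <;> simp [_root_.pext, one_apply, hij, eq_comm]
  · simp [_root_.pext]

lemma exists_Bpath_pext_and_Cmat_pext_eq_fromBlocks (hsc : SignCoherenceOfC) {n : ℕ}
    {B : Matrix (Fin n) (Fin n) ℤ} (hB : IsSkewSymmetrizable B) (p : List (Fin n)) :
    ∃ X, Bpath (pext B) (p.map Sum.inl) = fromBlocks (Bpath B p) X (Cmat B p) 0 ∧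
      Cmat (pext B) (p.map Sum.inl) = fromBlocks (Cmat B p) 0 0 1 := by
  obtain ⟨d, hd, hskew⟩ := hB.exists_skewSymmetrizedBy
  induction p using List.reverseRecOn with
  | nil => exact ⟨-1, rfl, fromBlocks_one.symm⟩
  | append_singleton q k ih =>
    obtain ⟨X, hBq, hCq⟩ := ih
    have hkk : Bpath B q k k = 0 := (hskew.bpath hd q).apply_self_eq_zero (hd k).ne'
    have hsign : ∀ i j, Cmat B q i k * X k j ≤ 0 := by
      have hext := hskew.pext.bpath (Sum.forall.2 ⟨hd, hd⟩) (q.map Sum.inl)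
      rw [hBq] at hext
      exact hext.mul_nonpos_of_fromBlocks hd fun i j => (hsc _ B hB q).mul_apply_nonneg i j k
    obtain ⟨X', hX'⟩ := mutate_fromBlocks_inl hkk hsign
    refine ⟨X', ?_, ?_⟩
    · rw [List.map_append, List.map_singleton, Bpath_append_singleton, hBq, hX',
        Bpath_append_singleton, Cmat_append_singleton]
    · rw [List.map_append, List.map_singleton, Cmat_append_singleton, hCq, hBq,
        mutateC_fromBlocks_inl hsign, Cmat_append_singleton]

/-- with sign-coherence, the `C`-matrix of the principal extension is
block diagonal. -/
theorem pext_Cmat_blockDiagonal (hsc : SignCoherenceOfC) {n : ℕ}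
    (B : Matrix (Fin n) (Fin n) ℤ) (hB : IsSkewSymmetrizable B) (p : List (Fin n)) :
    Cmat (pext B) (p.map Sum.inl) = Matrix.fromBlocks (Cmat B p) 0 0 1 :=
  (exists_Bpath_pext_and_Cmat_pext_eq_fromBlocks hsc hB p).choose_spec.2
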